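/- For any two row vectors X, Y ∈ ℝ^{1×n} (i.e. 1×n real matrices), one has X(I_n ⊗ Y) = Y(X ⊗ I_n), where ⊗ denotes the Kronecker product of matrices and I_n is the n×n identity matrix. -/
import Mathlib


open Kronecker

/-- **Lemma 3.1.** For two row vectors `X, Y ∈ ℝ^{1×n}`,
`X (I_n ⊗ Y) = Y (X ⊗ I_n)`, where `⊗` is the Kronecker product.
The row indices `Fin n × Fin 1` (resp. `Fin 1 × Fin n`) of the Kronecker
products are identified with `Fin n` via the canonical equivalences. -/
theorem row_vector_kronecker_swap (n : ℕ) (X Y : Matrix (Fin 1) (Fin n) ℝ) :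
    X * (Matrix.reindex (Equiv.prodUnique (Fin n) (Fin 1)) (Equiv.refl (Fin n × Fin n))
          ((1 : Matrix (Fin n) (Fin n) ℝ) ⊗ₖ Y))
      = Y * (Matrix.reindex (Equiv.uniqueProd (Fin n) (Fin 1)) (Equiv.refl (Fin n × Fin n))
          (X ⊗ₖ (1 : Matrix (Fin n) (Fin n) ℝ))) := by
  ext i jk
  obtain ⟨j, k⟩ := jk
  fin_cases i
  simp [Matrix.mul_apply, Matrix.kroneckerMap_apply, Matrix.one_apply, ite_and,
    Finset.sum_ite_eq, Finset.sum_ite_eq']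
  ring
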